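/- Let Ω = [0,L]² × [0,1] be the fundamental periodic domain. There is a constant C > 0 (depending only on Ω) such that for all space-periodic functions w, θ, w₁, θ₁ with w, θ, w₁, θ₁, ∂_z w₁, ∂_z θ₁ ∈ L²(Ω), one has ∫_Ω | w(x,y,z) \overline{w₁θ₁}(z) θ(x,y,z) | dx dy dz ≤ C ‖w‖₂ ‖θ‖₂ (‖w₁‖₂ + ‖∂_z w₁‖₂)(‖θ₁‖₂ + ‖∂_z θ₁‖₂), where \overline{w₁θ₁}(z) = L^{-2} ∫_{[0,L]²} w₁ θ₁ dx dy. -/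

import Mathlib

open MeasureTheory Set Function

namespace RRC

/-- partial derivative in the first (x) variable -/
noncomputable def px (f : ℝ → ℝ → ℝ → ℝ) : ℝ → ℝ → ℝ → ℝ :=
  fun x y z => deriv (fun t => f t y z) x

/-- partial derivative in the second (y) variable -/
noncomputable def py (f : ℝ → ℝ → ℝ → ℝ) : ℝ → ℝ → ℝ → ℝ :=
  fun x y z => deriv (fun t => f x t z) y

/-- partial derivative in the third (z, vertical) variable -/
noncomputable def pz (f : ℝ → ℝ → ℝ → ℝ) : ℝ → ℝ → ℝ → ℝ :=
  fun x y z => deriv (fun t => f x y t) z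

/-- integral over the fundamental periodic domain Ω = [0,L]² × [0,1] -/
noncomputable def intBox (L : ℝ) (f : ℝ → ℝ → ℝ → ℝ) : ℝ :=
  ∫ x in Icc (0:ℝ) L, ∫ y in Icc (0:ℝ) L, ∫ z in Icc (0:ℝ) 1, f x y z

/-- L²(Ω) norm -/
noncomputable def l2 (L : ℝ) (f : ℝ → ℝ → ℝ → ℝ) : ℝ :=
  Real.sqrt (intBox L (fun x y z => (f x y z) ^ 2))

/-- L²(Ω) norm of the horizontal gradient ∇_h f -/
noncomputable def l2h (L : ℝ) (f : ℝ → ℝ → ℝ → ℝ) : ℝ :=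
  Real.sqrt (intBox L (fun x y z => (px f x y z) ^ 2 + (py f x y z) ^ 2))

/-- space-periodicity on Ω = [0,L]² × [0,1] -/
def Per (L : ℝ) (f : ℝ → ℝ → ℝ → ℝ) : Prop :=
  (∀ y z, Periodic (fun x => f x y z) L) ∧
  (∀ x z, Periodic (fun y => f x y z) L) ∧
  (∀ x y, Periodic (fun z => f x y z) 1)

/-- smoothness (as a function of all three variables jointly) -/
def Smooth3 (f : ℝ → ℝ → ℝ → ℝ) : Prop :=
  ContDiff ℝ (⊤ : ℕ∞) (fun p : ℝ × ℝ × ℝ => f p.1 p.2.1 p.2.2)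

/-- horizontal mean:  \bar f(z) = L⁻² ∫_{[0,L]²} f(x,y,z) dx dy -/
noncomputable def mh (L : ℝ) (f : ℝ → ℝ → ℝ → ℝ) (z : ℝ) : ℝ :=
  (1 / L ^ 2) * ∫ x in Icc (0:ℝ) L, ∫ y in Icc (0:ℝ) L, f x y z

/-- H¹(Ω) norm -/
noncomputable def h1 (L : ℝ) (f : ℝ → ℝ → ℝ → ℝ) : ℝ :=
  Real.sqrt (intBox L (fun x y z =>
    (f x y z) ^ 2 + (px f x y z) ^ 2 + (py f x y z) ^ 2 + (pz f x y z) ^ 2))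

end RRC

namespace RRC

/-! ### Auxiliary lemmas -/

lemma aux_contP {α : Type*} [TopologicalSpace α] [FirstCountableTopology α]
    [LocallyCompactSpace α]
    {F : α → ℝ → ℝ} (hF : Continuous (uncurry F)) {c d : ℝ} :
    Continuous (fun s => ∫ t in Icc c d, F s t) :=
  continuous_parametric_integral_of_continuous hF isCompact_Icc

lemma aux_contP2 {F : ℝ → ℝ → ℝ → ℝ} (hF : Continuous fun p : ℝ × ℝ × ℝ => F p.1 p.2.1 p.2.2)
    {a' b' c d : ℝ} :
    Continuous (fun x => ∫ s in Icc a' b', ∫ t in Icc c d, F x s t) := by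
  apply aux_contP (F := fun x s => ∫ t in Icc c d, F x s t)
  exact aux_contP (α := ℝ × ℝ) (F := fun q t => F q.1 q.2 t)
    (by exact hF.comp (show Continuous fun q : (ℝ × ℝ) × ℝ => (q.1.1, q.1.2, q.2) from by fun_prop))

lemma aux_contP2' {F : ℝ → ℝ → ℝ → ℝ} (hF : Continuous fun p : ℝ × ℝ × ℝ => F p.1 p.2.1 p.2.2)
    {a b a' b' : ℝ} :
    Continuous (fun z => ∫ x in Icc a b, ∫ y in Icc a' b', F x y z) := by
  apply aux_contP (F := fun z x => ∫ y in Icc a' b', F x y z)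
  exact aux_contP (α := ℝ × ℝ) (F := fun q y => F q.2 y q.1)
    (by exact hF.comp (show Continuous fun q : (ℝ × ℝ) × ℝ => (q.1.2, q.2, q.1.1) from by fun_prop))

lemma aux_fin {c d : ℝ} : IsFiniteMeasure (volume.restrict (Icc c d)) :=
  ⟨by rw [Measure.restrict_apply_univ]; exact measure_Icc_lt_top⟩

lemma aux_memL2 {c d : ℝ} {f : ℝ → ℝ} (hf : Continuous f) :
    MemLp f (ENNReal.ofReal 2) (volume.restrict (Icc c d)) := by
  haveI := (aux_fin (c := c) (d := d))
  obtain ⟨C, hC⟩ := isCompact_Icc.exists_bound_of_continuousOn (f := f) hf.continuousOn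
  exact MemLp.of_bound hf.aestronglyMeasurable C
    ((ae_restrict_iff' measurableSet_Icc).2 (ae_of_all _ hC))

/-- one-dimensional Cauchy–Schwarz -/
lemma aux_cs1 {c d : ℝ} {f g : ℝ → ℝ} (hf : Continuous f) (hg : Continuous g) :
    ∫ t in Icc c d, |f t * g t| ≤
      Real.sqrt (∫ t in Icc c d, f t ^ 2) * Real.sqrt (∫ t in Icc c d, g t ^ 2) := by
  have hconj : Real.HolderConjugate 2 2 := Real.HolderConjugate.two_two
  have h := integral_mul_le_Lp_mul_Lq_of_nonneg (μ := volume.restrict (Icc c d)) hconj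
    (f := fun t => |f t|) (g := fun t => |g t|)
    (ae_of_all _ fun t => abs_nonneg _) (ae_of_all _ fun t => abs_nonneg _)
    (by simpa [Real.norm_eq_abs] using (aux_memL2 (c := c) (d := d) hf).norm)
    (by simpa [Real.norm_eq_abs] using (aux_memL2 (c := c) (d := d) hg).norm)
  simp only [← abs_mul] at h
  calc ∫ t in Icc c d, |f t * g t|
      ≤ (∫ t in Icc c d, |f t| ^ (2:ℝ)) ^ (1/(2:ℝ)) *
        (∫ t in Icc c d, |g t| ^ (2:ℝ)) ^ (1/(2:ℝ)) := h
    _ = _ := by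
        rw [← Real.sqrt_eq_rpow, ← Real.sqrt_eq_rpow]
        simp only [Real.rpow_two, sq_abs]

/-- two-dimensional (iterated) Cauchy–Schwarz -/
lemma aux_cs2 {a b c d : ℝ} {F G : ℝ → ℝ → ℝ}
    (hF : Continuous (uncurry F)) (hG : Continuous (uncurry G)) :
    (∫ s in Icc a b, ∫ t in Icc c d, |F s t * G s t|) ≤
      Real.sqrt (∫ s in Icc a b, ∫ t in Icc c d, F s t ^ 2) *
      Real.sqrt (∫ s in Icc a b, ∫ t in Icc c d, G s t ^ 2) := by
  have hucont : Continuous fun s => ∫ t in Icc c d, F s t ^ 2 :=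
    aux_contP (F := fun s t => F s t ^ 2) (by exact hF.pow 2)
  have hvcont : Continuous fun s => ∫ t in Icc c d, G s t ^ 2 :=
    aux_contP (F := fun s t => G s t ^ 2) (by exact hG.pow 2)
  have hunn : ∀ s, 0 ≤ ∫ t in Icc c d, F s t ^ 2 := fun s => integral_nonneg fun t => sq_nonneg _
  have hvnn : ∀ s, 0 ≤ ∫ t in Icc c d, G s t ^ 2 := fun s => integral_nonneg fun t => sq_nonneg _
  have step1 : ∀ s, (∫ t in Icc c d, |F s t * G s t|) ≤
      Real.sqrt (∫ t in Icc c d, F s t ^ 2) * Real.sqrt (∫ t in Icc c d, G s t ^ 2) := fun s =>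
    aux_cs1 (hF.comp (Continuous.prodMk_right s)) (hG.comp (Continuous.prodMk_right s))
  have hLcont : Continuous fun s => ∫ t in Icc c d, |F s t * G s t| :=
    aux_contP (F := fun s t => |F s t * G s t|) (by exact (hF.mul hG).abs)
  calc (∫ s in Icc a b, ∫ t in Icc c d, |F s t * G s t|)
      ≤ ∫ s in Icc a b, Real.sqrt (∫ t in Icc c d, F s t ^ 2) *
          Real.sqrt (∫ t in Icc c d, G s t ^ 2) :=
        setIntegral_mono hLcont.integrableOn_Icc
          (hucont.sqrt.mul hvcont.sqrt).integrableOn_Icc step1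
    _ = ∫ s in Icc a b, |Real.sqrt (∫ t in Icc c d, F s t ^ 2) *
          Real.sqrt (∫ t in Icc c d, G s t ^ 2)| := by
        refine integral_congr_ae (ae_of_all _ fun s => ?_)
        simp [abs_mul, abs_of_nonneg (Real.sqrt_nonneg _)]
    _ ≤ Real.sqrt (∫ s in Icc a b, Real.sqrt (∫ t in Icc c d, F s t ^ 2) ^ 2) *
        Real.sqrt (∫ s in Icc a b, Real.sqrt (∫ t in Icc c d, G s t ^ 2) ^ 2) :=
        aux_cs1 hucont.sqrt hvcont.sqrt
    _ = _ := by
        congr 1 <;> · congr 1; refine integral_congr_ae (ae_of_all _ fun s => ?_)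
                      exact Real.sq_sqrt (by first | exact hunn s | exact hvnn s)

/-- three-dimensional (iterated) Cauchy–Schwarz -/
lemma aux_cs3 {a b a' b' c d : ℝ} {F G : ℝ → ℝ → ℝ → ℝ}
    (hF : Continuous fun p : ℝ × ℝ × ℝ => F p.1 p.2.1 p.2.2)
    (hG : Continuous fun p : ℝ × ℝ × ℝ => G p.1 p.2.1 p.2.2) :
    (∫ x in Icc a b, ∫ s in Icc a' b', ∫ t in Icc c d, |F x s t * G x s t|) ≤
      Real.sqrt (∫ x in Icc a b, ∫ s in Icc a' b', ∫ t in Icc c d, F x s t ^ 2) *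
      Real.sqrt (∫ x in Icc a b, ∫ s in Icc a' b', ∫ t in Icc c d, G x s t ^ 2) := by
  have hucont : Continuous fun x => ∫ s in Icc a' b', ∫ t in Icc c d, F x s t ^ 2 :=
    aux_contP2 (F := fun x s t => F x s t ^ 2) (by exact hF.pow 2)
  have hvcont : Continuous fun x => ∫ s in Icc a' b', ∫ t in Icc c d, G x s t ^ 2 :=
    aux_contP2 (F := fun x s t => G x s t ^ 2) (by exact hG.pow 2)
  have hunn : ∀ x, 0 ≤ ∫ s in Icc a' b', ∫ t in Icc c d, F x s t ^ 2 := fun x =>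
    integral_nonneg fun s => integral_nonneg fun t => sq_nonneg _
  have hvnn : ∀ x, 0 ≤ ∫ s in Icc a' b', ∫ t in Icc c d, G x s t ^ 2 := fun x =>
    integral_nonneg fun s => integral_nonneg fun t => sq_nonneg _
  have step1 : ∀ x, (∫ s in Icc a' b', ∫ t in Icc c d, |F x s t * G x s t|) ≤
      Real.sqrt (∫ s in Icc a' b', ∫ t in Icc c d, F x s t ^ 2) *
      Real.sqrt (∫ s in Icc a' b', ∫ t in Icc c d, G x s t ^ 2) := fun x =>
    aux_cs2
      (by exact hF.comp (show Continuous fun q : ℝ × ℝ => (x, q.1, q.2) from by fun_prop))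
      (by exact hG.comp (show Continuous fun q : ℝ × ℝ => (x, q.1, q.2) from by fun_prop))
  have hLcont : Continuous fun x => ∫ s in Icc a' b', ∫ t in Icc c d, |F x s t * G x s t| :=
    aux_contP2 (F := fun x s t => |F x s t * G x s t|) (by exact (hF.mul hG).abs)
  calc (∫ x in Icc a b, ∫ s in Icc a' b', ∫ t in Icc c d, |F x s t * G x s t|)
      ≤ ∫ x in Icc a b, Real.sqrt (∫ s in Icc a' b', ∫ t in Icc c d, F x s t ^ 2) *
          Real.sqrt (∫ s in Icc a' b', ∫ t in Icc c d, G x s t ^ 2) :=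
        setIntegral_mono hLcont.integrableOn_Icc
          (hucont.sqrt.mul hvcont.sqrt).integrableOn_Icc step1
    _ = ∫ x in Icc a b, |Real.sqrt (∫ s in Icc a' b', ∫ t in Icc c d, F x s t ^ 2) *
          Real.sqrt (∫ s in Icc a' b', ∫ t in Icc c d, G x s t ^ 2)| := by
        refine integral_congr_ae (ae_of_all _ fun x => ?_)
        simp [abs_mul, abs_of_nonneg (Real.sqrt_nonneg _)]
    _ ≤ Real.sqrt (∫ x in Icc a b,
          Real.sqrt (∫ s in Icc a' b', ∫ t in Icc c d, F x s t ^ 2) ^ 2) *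
        Real.sqrt (∫ x in Icc a b,
          Real.sqrt (∫ s in Icc a' b', ∫ t in Icc c d, G x s t ^ 2) ^ 2) :=
        aux_cs1 hucont.sqrt hvcont.sqrt
    _ = _ := by
        congr 1 <;> · congr 1; refine integral_congr_ae (ae_of_all _ fun x => ?_)
                      exact Real.sq_sqrt (by first | exact hunn x | exact hvnn x)

lemma Smooth3.cont {f} (hf : Smooth3 f) :
    Continuous (fun p : ℝ × ℝ × ℝ => f p.1 p.2.1 p.2.2) := hf.continuous

lemma Smooth3.cont_pz {f} (hf : Smooth3 f) :
    Continuous (fun p : ℝ × ℝ × ℝ => pz f p.1 p.2.1 p.2.2) := by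
  set F := fun p : ℝ × ℝ × ℝ => f p.1 p.2.1 p.2.2 with hFdef
  have hder : ∀ p : ℝ × ℝ × ℝ,
      HasDerivAt (fun t => f p.1 p.2.1 t) (fderiv ℝ F p ((0:ℝ),(0:ℝ),(1:ℝ))) p.2.2 := by
    intro p
    have hγ : HasDerivAt (fun t : ℝ => (p.1, p.2.1, t)) ((0:ℝ),(0:ℝ),(1:ℝ)) p.2.2 :=
      (hasDerivAt_const _ _).prodMk ((hasDerivAt_const _ _).prodMk (hasDerivAt_id _))
    have hFd : HasFDerivAt F (fderiv ℝ F p) p :=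
      ((hf.differentiable (by simp)) p).hasFDerivAt
    exact hFd.comp_hasDerivAt p.2.2 hγ
  have heq : (fun p : ℝ × ℝ × ℝ => pz f p.1 p.2.1 p.2.2)
      = fun p => fderiv ℝ F p ((0:ℝ),(0:ℝ),(1:ℝ)) := funext fun p => (hder p).deriv
  rw [heq]
  exact (hf.continuous_fderiv (by simp)).clm_apply continuous_const

lemma Smooth3.hasDerivAt_z {f} (hf : Smooth3 f) (x y u : ℝ) :
    HasDerivAt (fun t => f x y t) (pz f x y u) u := by
  have hdiff : DifferentiableAt ℝ (fun t => f x y t) u := by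
    have h1 : DifferentiableAt ℝ (fun p : ℝ × ℝ × ℝ => f p.1 p.2.1 p.2.2) (x, y, u) :=
      (hf.differentiable (by simp)) _
    have h2 : DifferentiableAt ℝ (fun t : ℝ => ((x:ℝ), (y:ℝ), t)) u := by fun_prop
    have := h1.comp u h2; exact this
  exact hdiff.hasDerivAt

/-- pointwise vertical Agmon-type bound -/
lemma aux_key_pointwise {f : ℝ → ℝ → ℝ → ℝ} (hf : Smooth3 f) (x y : ℝ) {z : ℝ}
    (hz : z ∈ Icc (0:ℝ) 1) :
    f x y z ^ 2 ≤ (∫ t in Icc (0:ℝ) 1, f x y t ^ 2) +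
      ∫ t in Icc (0:ℝ) 1, |2 * f x y t * pz f x y t| := by
  have hslice : Continuous fun t => f x y t :=
    hf.cont.comp (show Continuous fun t : ℝ => (x, y, t) from by fun_prop)
  have hpzslice : Continuous fun t => pz f x y t :=
    hf.cont_pz.comp (show Continuous fun t : ℝ => (x, y, t) from by fun_prop)
  have hdcont : Continuous fun u => 2 * f x y u * pz f x y u :=
    ((continuous_const.mul hslice).mul hpzslice)
  have hder : ∀ u, HasDerivAt (fun t => f x y t ^ 2) (2 * f x y u * pz f x y u) u := by
    intro u
    have := (hf.hasDerivAt_z x y u).fun_pow 2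
    simpa [mul_comm, mul_assoc] using this
  have ftc : ∀ t, (∫ u in t..z, 2 * f x y u * pz f x y u) = f x y z ^ 2 - f x y t ^ 2 :=
    fun t => intervalIntegral.integral_eq_sub_of_hasDerivAt (fun u _ => hder u)
      (hdcont.intervalIntegrable _ _)
  set K := ∫ t in Icc (0:ℝ) 1, |2 * f x y t * pz f x y t| with hK
  have hpt : ∀ t ∈ Icc (0:ℝ) 1, f x y z ^ 2 ≤ f x y t ^ 2 + K := by
    intro t ht
    have h1 : f x y z ^ 2 - f x y t ^ 2 ≤ |∫ u in t..z, 2 * f x y u * pz f x y u| := by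
      rw [ftc t]; exact le_abs_self _
    have h2 : |∫ u in t..z, 2 * f x y u * pz f x y u| ≤
        ∫ u in Set.uIoc t z, |2 * f x y u * pz f x y u| := by
      simpa only [Real.norm_eq_abs] using
        intervalIntegral.norm_integral_le_integral_norm_uIoc
          (f := fun u => 2 * f x y u * pz f x y u) (a := t) (b := z) (μ := volume)
    have h3 : (∫ u in Set.uIoc t z, |2 * f x y u * pz f x y u|) ≤ K := by
      apply setIntegral_mono_set hdcont.abs.integrableOn_Icc
        (ae_of_all _ fun u => abs_nonneg _)
      refine HasSubset.Subset.eventuallyLE ?_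
      rw [uIoc_eq_union]
      rintro u (hu | hu)
      · exact ⟨le_trans ht.1 (le_of_lt hu.1), le_trans hu.2 hz.2⟩
      · exact ⟨le_trans hz.1 (le_of_lt hu.1), le_trans hu.2 ht.2⟩
    linarith
  have hvol : volume.real (Icc (0:ℝ) 1) = 1 := by simp
  calc f x y z ^ 2 = ∫ t in Icc (0:ℝ) 1, f x y z ^ 2 := by
        rw [setIntegral_const, hvol, one_smul]
    _ ≤ ∫ t in Icc (0:ℝ) 1, (f x y t ^ 2 + K) := by
        refine setIntegral_mono_on (integrableOn_const measure_Icc_lt_top.ne)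
          (((hslice.pow 2).add continuous_const).integrableOn_Icc) measurableSet_Icc hpt
    _ = (∫ t in Icc (0:ℝ) 1, f x y t ^ 2) + K := by
        rw [integral_add (f := fun t => f x y t ^ 2) (μ := volume.restrict (Icc (0:ℝ) 1)) (by exact (hslice.pow 2).integrableOn_Icc)
          (integrableOn_const measure_Icc_lt_top.ne)]
        simp [hvol]

lemma aux_mono2 {a b c d : ℝ} {F G : ℝ → ℝ → ℝ}
    (hF : Continuous (uncurry F)) (hG : Continuous (uncurry G))
    (h : ∀ s t, F s t ≤ G s t) :
    (∫ s in Icc a b, ∫ t in Icc c d, F s t) ≤ ∫ s in Icc a b, ∫ t in Icc c d, G s t := by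
  refine setIntegral_mono ((aux_contP hF).integrableOn_Icc) ((aux_contP hG).integrableOn_Icc)
    (fun s => ?_)
  exact setIntegral_mono ((hF.comp (Continuous.prodMk_right s)).integrableOn_Icc)
    ((hG.comp (Continuous.prodMk_right s)).integrableOn_Icc) (fun t => h s t)

lemma aux_add2 {a b c d : ℝ} {A B : ℝ → ℝ → ℝ}
    (hA : Continuous (uncurry A)) (hB : Continuous (uncurry B)) :
    (∫ s in Icc a b, ∫ t in Icc c d, (A s t + B s t)) =
      (∫ s in Icc a b, ∫ t in Icc c d, A s t) + ∫ s in Icc a b, ∫ t in Icc c d, B s t := by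
  calc (∫ s in Icc a b, ∫ t in Icc c d, (A s t + B s t))
      = ∫ s in Icc a b, ((∫ t in Icc c d, A s t) + ∫ t in Icc c d, B s t) :=
        integral_congr_ae (ae_of_all _ fun s =>
          integral_add ((hA.comp (Continuous.prodMk_right s)).integrableOn_Icc)
            ((hB.comp (Continuous.prodMk_right s)).integrableOn_Icc))
    _ = _ := integral_add ((aux_contP hA).integrableOn_Icc) ((aux_contP hB).integrableOn_Icc)

lemma aux_mono3 {a b a' b' c d : ℝ} {F G : ℝ → ℝ → ℝ → ℝ}
    (hF : Continuous fun p : ℝ × ℝ × ℝ => F p.1 p.2.1 p.2.2)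
    (hG : Continuous fun p : ℝ × ℝ × ℝ => G p.1 p.2.1 p.2.2)
    (h : ∀ x ∈ Icc a b, ∀ y ∈ Icc a' b', ∀ z ∈ Icc c d, F x y z ≤ G x y z) :
    (∫ x in Icc a b, ∫ y in Icc a' b', ∫ z in Icc c d, F x y z) ≤
      ∫ x in Icc a b, ∫ y in Icc a' b', ∫ z in Icc c d, G x y z := by
  refine setIntegral_mono_on ((aux_contP2 hF).integrableOn_Icc)
    ((aux_contP2 hG).integrableOn_Icc) measurableSet_Icc (fun x hx => ?_)
  refine setIntegral_mono_on
    ((aux_contP (F := fun y t => F x y t)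
      (by exact hF.comp (show Continuous fun q : ℝ × ℝ => (x, q.1, q.2) from by fun_prop))).integrableOn_Icc)
    ((aux_contP (F := fun y t => G x y t)
      (by exact hG.comp (show Continuous fun q : ℝ × ℝ => (x, q.1, q.2) from by fun_prop))).integrableOn_Icc)
    measurableSet_Icc (fun y hy => ?_)
  exact setIntegral_mono_on
    ((hF.comp (show Continuous fun z : ℝ => (x, y, z) from by fun_prop)).integrableOn_Icc)
    ((hG.comp (show Continuous fun z : ℝ => (x, y, z) from by fun_prop)).integrableOn_Icc)
    measurableSet_Icc (fun z hz => h x hx y hy z hz)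

lemma aux_abs_int2 {a b c d : ℝ} {H : ℝ → ℝ → ℝ} (hH : Continuous (uncurry H)) :
    |∫ s in Icc a b, ∫ t in Icc c d, H s t| ≤ ∫ s in Icc a b, ∫ t in Icc c d, |H s t| := by
  calc |∫ s in Icc a b, ∫ t in Icc c d, H s t|
      ≤ ∫ s in Icc a b, |∫ t in Icc c d, H s t| := by
        simpa [Real.norm_eq_abs] using
          norm_integral_le_integral_norm (μ := volume.restrict (Icc a b))
            (fun s => ∫ t in Icc c d, H s t)
    _ ≤ ∫ s in Icc a b, ∫ t in Icc c d, |H s t| :=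
        setIntegral_mono ((aux_contP hH).abs.integrableOn_Icc)
          ((aux_contP (F := fun s t => |H s t|) (by exact hH.abs)).integrableOn_Icc)
          (fun s => by
            simpa [Real.norm_eq_abs] using
              norm_integral_le_integral_norm (μ := volume.restrict (Icc c d)) (fun t => H s t))

lemma aux_intBox_sq_nonneg {L : ℝ} (f : ℝ → ℝ → ℝ → ℝ) :
    0 ≤ intBox L (fun x y z => f x y z ^ 2) :=
  integral_nonneg fun x => integral_nonneg fun y => integral_nonneg fun z => sq_nonneg _

lemma aux_l2_sq {L : ℝ} (f : ℝ → ℝ → ℝ → ℝ) :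
    l2 L f ^ 2 = intBox L (fun x y z => f x y z ^ 2) :=
  Real.sq_sqrt (aux_intBox_sq_nonneg f)

/-- uniform bound for horizontal slices of the square integral -/
lemma aux_zsup {L : ℝ} {f : ℝ → ℝ → ℝ → ℝ} (hf : Smooth3 f) {z : ℝ} (hz : z ∈ Icc (0:ℝ) 1) :
    (∫ x in Icc (0:ℝ) L, ∫ y in Icc (0:ℝ) L, f x y z ^ 2) ≤ (l2 L f + l2 L (pz f)) ^ 2 := by
  have hcA : Continuous (uncurry fun x y => ∫ t in Icc (0:ℝ) 1, f x y t ^ 2) := by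
    exact aux_contP (α := ℝ × ℝ) (F := fun q t => f q.1 q.2 t ^ 2)
      (by exact (hf.cont.comp
        (show Continuous fun r : (ℝ × ℝ) × ℝ => (r.1.1, r.1.2, r.2) from by fun_prop)).pow 2)
  have hcB : Continuous (uncurry fun x y => ∫ t in Icc (0:ℝ) 1, |2 * f x y t * pz f x y t|) := by
    refine aux_contP (α := ℝ × ℝ) (F := fun q t => |2 * f q.1 q.2 t * pz f q.1 q.2 t|) ?_
    have h1 : Continuous fun r : (ℝ × ℝ) × ℝ => f r.1.1 r.1.2 r.2 :=
      hf.cont.comp (show Continuous fun r : (ℝ × ℝ) × ℝ => (r.1.1, r.1.2, r.2) from by fun_prop)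
    have h2 : Continuous fun r : (ℝ × ℝ) × ℝ => pz f r.1.1 r.1.2 r.2 :=
      hf.cont_pz.comp (show Continuous fun r : (ℝ × ℝ) × ℝ => (r.1.1, r.1.2, r.2) from by fun_prop)
    exact ((continuous_const.mul h1).mul h2).abs
  have hslice : Continuous (uncurry fun x y => f x y z ^ 2) := by
    exact (hf.cont.comp
      (show Continuous fun q : ℝ × ℝ => (q.1, q.2, z) from by fun_prop)).pow 2
  have h1 : (∫ x in Icc (0:ℝ) L, ∫ y in Icc (0:ℝ) L, f x y z ^ 2) ≤
      ∫ x in Icc (0:ℝ) L, ∫ y in Icc (0:ℝ) L,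
        ((∫ t in Icc (0:ℝ) 1, f x y t ^ 2) +
          ∫ t in Icc (0:ℝ) 1, |2 * f x y t * pz f x y t|) := by
    refine aux_mono2 hslice (by exact hcA.add hcB) ?_
    exact fun x y => aux_key_pointwise hf x y hz
  rw [aux_add2 hcA hcB] at h1
  have h2 : (∫ x in Icc (0:ℝ) L, ∫ y in Icc (0:ℝ) L, ∫ t in Icc (0:ℝ) 1,
      |2 * f x y t * pz f x y t|) =
      2 * ∫ x in Icc (0:ℝ) L, ∫ y in Icc (0:ℝ) L, ∫ t in Icc (0:ℝ) 1,
        |f x y t * pz f x y t| := by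
    simp_rw [mul_assoc, abs_mul (2:ℝ), abs_two, integral_const_mul]
  have h3 := aux_cs3 (a := 0) (b := L) (a' := 0) (b' := L) (c := 0) (d := 1)
    hf.cont hf.cont_pz
  have hl2f : Real.sqrt (∫ x in Icc (0:ℝ) L, ∫ s in Icc (0:ℝ) L, ∫ t in Icc (0:ℝ) 1,
      f x s t ^ 2) = l2 L f := rfl
  have hl2pz : Real.sqrt (∫ x in Icc (0:ℝ) L, ∫ s in Icc (0:ℝ) L, ∫ t in Icc (0:ℝ) 1,
      pz f x s t ^ 2) = l2 L (pz f) := rfl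
  rw [hl2f, hl2pz] at h3
  have he : (∫ x in Icc (0:ℝ) L, ∫ y in Icc (0:ℝ) L, ∫ t in Icc (0:ℝ) 1, f x y t ^ 2) =
      l2 L f ^ 2 := (aux_l2_sq f).symm
  have hnn1 : 0 ≤ l2 L f := Real.sqrt_nonneg _
  have hnn2 : 0 ≤ l2 L (pz f) := Real.sqrt_nonneg _
  nlinarith [h1, h2, h3, he]

/-- ∫_Ω |w \overline{w₁θ₁}(z) θ| ≤ C ‖w‖₂‖θ‖₂(‖w₁‖₂+‖∂_z w₁‖₂)(‖θ₁‖₂+‖∂_z θ₁‖₂). -/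
theorem statement13 (L : ℝ) (hL : 0 < L) :
    ∃ C > (0:ℝ), ∀ w θ w₁ θ₁ : ℝ → ℝ → ℝ → ℝ,
      Smooth3 w → Smooth3 θ → Smooth3 w₁ → Smooth3 θ₁ →
      Per L w → Per L θ → Per L w₁ → Per L θ₁ →
      intBox L (fun x y z =>
          |w x y z * mh L (fun a b c => w₁ a b c * θ₁ a b c) z * θ x y z|) ≤
        C * l2 L w * l2 L θ * (l2 L w₁ + l2 L (pz w₁)) * (l2 L θ₁ + l2 L (pz θ₁)) := by
  refine ⟨1 / L ^ 2, by positivity, fun w θ w₁ θ₁ hw hθ hw₁ hθ₁ _ _ _ _ => ?_⟩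
  set H : ℝ → ℝ → ℝ → ℝ := fun a b c => w₁ a b c * θ₁ a b c with hHdef
  have hHcont : Continuous fun p : ℝ × ℝ × ℝ => H p.1 p.2.1 p.2.2 := hw₁.cont.mul hθ₁.cont
  have hmcont : Continuous (mh L H) := by
    unfold mh
    exact continuous_const.mul (aux_contP2' hHcont)
  set M : ℝ := (1 / L ^ 2) * ((l2 L w₁ + l2 L (pz w₁)) * (l2 L θ₁ + l2 L (pz θ₁))) with hMdef
  have hb1 : (0:ℝ) ≤ l2 L w₁ + l2 L (pz w₁) :=
    add_nonneg (Real.sqrt_nonneg _) (Real.sqrt_nonneg _)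
  have hb2 : (0:ℝ) ≤ l2 L θ₁ + l2 L (pz θ₁) :=
    add_nonneg (Real.sqrt_nonneg _) (Real.sqrt_nonneg _)
  have hMnn : 0 ≤ M := by positivity
  -- uniform bound on the horizontal mean
  have hmb : ∀ z ∈ Icc (0:ℝ) 1, |mh L H z| ≤ M := by
    intro z hz
    have h0 : |mh L H z| = (1 / L ^ 2) *
        |∫ x in Icc (0:ℝ) L, ∫ y in Icc (0:ℝ) L, H x y z| := by
      rw [mh, abs_mul, abs_of_nonneg (by positivity : (0:ℝ) ≤ 1 / L ^ 2)]
    have h1 : |∫ x in Icc (0:ℝ) L, ∫ y in Icc (0:ℝ) L, H x y z| ≤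
        ∫ x in Icc (0:ℝ) L, ∫ y in Icc (0:ℝ) L, |H x y z| :=
      aux_abs_int2 (H := fun x y => H x y z)
        (by exact hHcont.comp (show Continuous fun q : ℝ × ℝ => (q.1, q.2, z) from by fun_prop))
    have h2 : (∫ x in Icc (0:ℝ) L, ∫ y in Icc (0:ℝ) L, |H x y z|) ≤
        Real.sqrt (∫ x in Icc (0:ℝ) L, ∫ y in Icc (0:ℝ) L, w₁ x y z ^ 2) *
        Real.sqrt (∫ x in Icc (0:ℝ) L, ∫ y in Icc (0:ℝ) L, θ₁ x y z ^ 2) :=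
      aux_cs2 (F := fun x y => w₁ x y z) (G := fun x y => θ₁ x y z)
        (by exact hw₁.cont.comp (show Continuous fun q : ℝ × ℝ => (q.1, q.2, z) from by fun_prop))
        (by exact hθ₁.cont.comp (show Continuous fun q : ℝ × ℝ => (q.1, q.2, z) from by fun_prop))
    have h3 : Real.sqrt (∫ x in Icc (0:ℝ) L, ∫ y in Icc (0:ℝ) L, w₁ x y z ^ 2) ≤
        l2 L w₁ + l2 L (pz w₁) := by
      have := Real.sqrt_le_sqrt (aux_zsup hw₁ hz (L := L))
      rwa [Real.sqrt_sq hb1] at this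
    have h4 : Real.sqrt (∫ x in Icc (0:ℝ) L, ∫ y in Icc (0:ℝ) L, θ₁ x y z ^ 2) ≤
        l2 L θ₁ + l2 L (pz θ₁) := by
      have := Real.sqrt_le_sqrt (aux_zsup hθ₁ hz (L := L))
      rwa [Real.sqrt_sq hb2] at this
    calc |mh L H z| = (1 / L ^ 2) *
          |∫ x in Icc (0:ℝ) L, ∫ y in Icc (0:ℝ) L, H x y z| := h0
      _ ≤ (1 / L ^ 2) * ((l2 L w₁ + l2 L (pz w₁)) * (l2 L θ₁ + l2 L (pz θ₁))) := by
          refine mul_le_mul_of_nonneg_left ?_ (by positivity)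
          refine le_trans h1 (le_trans h2 ?_)
          exact mul_le_mul h3 h4 (Real.sqrt_nonneg _) hb1
      _ = M := rfl
  -- pointwise bound and monotonicity of the triple integral
  have hwcont := hw.cont
  have hθcont := hθ.cont
  have hLHScont : Continuous fun p : ℝ × ℝ × ℝ =>
      |w p.1 p.2.1 p.2.2 * mh L H p.2.2 * θ p.1 p.2.1 p.2.2| :=
    ((hwcont.mul (hmcont.comp (continuous_snd.comp continuous_snd))).mul hθcont).abs
  have hRHScont : Continuous fun p : ℝ × ℝ × ℝ =>
      M * |w p.1 p.2.1 p.2.2 * θ p.1 p.2.1 p.2.2| :=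
    continuous_const.mul (hwcont.mul hθcont).abs
  have hmono : intBox L (fun x y z => |w x y z * mh L H z * θ x y z|) ≤
      intBox L (fun x y z => M * |w x y z * θ x y z|) := by
    refine aux_mono3 hLHScont hRHScont ?_
    intro x _ y _ z hz
    have : |w x y z * mh L H z * θ x y z| = |mh L H z| * |w x y z * θ x y z| := by
      rw [← abs_mul]; ring_nf
    rw [this]
    exact mul_le_mul_of_nonneg_right (hmb z hz) (abs_nonneg _)
  have hpull : intBox L (fun x y z => M * |w x y z * θ x y z|) =
      M * intBox L (fun x y z => |w x y z * θ x y z|) := by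
    unfold intBox
    simp_rw [integral_const_mul]
  have hcs : intBox L (fun x y z => |w x y z * θ x y z|) ≤ l2 L w * l2 L θ :=
    aux_cs3 (a := 0) (b := L) (a' := 0) (b' := L) (c := 0) (d := 1) hwcont hθcont
  have habsnn : 0 ≤ intBox L (fun x y z => |w x y z * θ x y z|) :=
    integral_nonneg fun x => integral_nonneg fun y => integral_nonneg fun z => abs_nonneg _
  calc intBox L (fun x y z => |w x y z * mh L H z * θ x y z|)
      ≤ M * intBox L (fun x y z => |w x y z * θ x y z|) := by rw [← hpull]; exact hmono
    _ ≤ M * (l2 L w * l2 L θ) := mul_le_mul_of_nonneg_left hcs hMnn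
    _ = 1 / L ^ 2 * l2 L w * l2 L θ * (l2 L w₁ + l2 L (pz w₁)) *
        (l2 L θ₁ + l2 L (pz θ₁)) := by rw [hMdef]; ring


end RRC
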